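/- arXiv:2310.01165 — 2 statements merged into one kernel-verified Lean document; each statement's English description precedes it below -/
import Mathlib

section
/- (Null-forgetting constraint, sufficiency) With exact quadratic losses E_o(θ) = ½(θ−θ_o)ᵀ H_o(θ−θ_o), H_o PSD, and updates Δ_t = θ_t − θ_{t−1}: if for every t ∈ [2,T] we have Δ_tᵀ(∑_{o<t} H_o)Δ_t = 0, then E_o(θ_T) = 0 for every o < T. -/
/-!
Each PSD quadratic form is nonnegative, so a vanishing quadratic form of `∑_{o<t} H_o` vanishes
for every summand, and for a PSD matrix `xᴴ H x = 0` forces `H x = 0`. Hence every update `Δ_t`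
lies in the kernel of every earlier `H_o`, and so does `θ_T - θ_o = ∑_{o<t≤T} Δ_t`.
-/

open Matrix

open scoped ComplexOrder

theorem AddSubgroup.sub_mem_of_forall_succ_sub_mem {G : Type*} [AddGroup G] (S : AddSubgroup G)
    (θ : ℕ → G) {a b : ℕ} (hab : a ≤ b) (h : ∀ t, a ≤ t → t < b → θ (t + 1) - θ t ∈ S) :
    θ b - θ a ∈ S := by
  induction b, hab using Nat.le_induction with
  | base => simp
  | succ k hak ih =>
    rw [← sub_add_sub_cancel]
    exact add_mem (h k hak k.lt_succ_self) (ih fun t hat htk => h t hat (htk.trans k.lt_succ_self))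

theorem Matrix.PosSemidef.mulVec_eq_zero_of_dotProduct_sum_mulVec_eq_zero
    {m ι 𝕜 : Type*} [Fintype m] [RCLike 𝕜] {s : Finset ι} {A : ι → Matrix m m 𝕜}
    (hA : ∀ i ∈ s, (A i).PosSemidef) {x : m → 𝕜} (hx : star x ⬝ᵥ (∑ i ∈ s, A i) *ᵥ x = 0)
    {i : ι} (hi : i ∈ s) : A i *ᵥ x = 0 := by
  rw [sum_mulVec, dotProduct_sum] at hx
  have hterms := (Finset.sum_eq_zero_iff_of_nonneg fun j hj =>
    (hA j hj).dotProduct_mulVec_nonneg x).mp hx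
  exact ((hA i hi).dotProduct_mulVec_zero_iff x).mp (hterms i hi)

theorem null_forgetting_constraint_sufficiency {n : ℕ} (T : ℕ)
    (θ : ℕ → Fin n → ℝ) (H : ℕ → Matrix (Fin n) (Fin n) ℝ)
    (hH : ∀ o, (H o).PosSemidef)
    (hconstraint : ∀ t, 2 ≤ t → t ≤ T →
      (θ t - θ (t - 1)) ⬝ᵥ
        (∑ o ∈ Finset.Ico 1 t, H o).mulVec (θ t - θ (t - 1)) = 0) :
    ∀ o, 1 ≤ o → o < T →
      (1 / 2 : ℝ) * ((θ T - θ o) ⬝ᵥ (H o).mulVec (θ T - θ o)) = 0 := by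
  intro o ho hoT
  have hstep : ∀ t, o ≤ t → t < T → H o *ᵥ (θ (t + 1) - θ t) = 0 := fun t hot htT =>
    PosSemidef.mulVec_eq_zero_of_dotProduct_sum_mulVec_eq_zero (fun i _ => hH i)
      (by simpa using hconstraint (t + 1) (by omega) htT) (Finset.mem_Ico.2 ⟨ho, by omega⟩)
  have hT : H o *ᵥ (θ T - θ o) = 0 :=
    (LinearMap.ker (H o).mulVecLin).toAddSubgroup.sub_mem_of_forall_succ_sub_mem θ hoT.le
      (by simpa using hstep)
  simp [hT]
end

section
/- (Null forgetting theorem, quadratic version) With exact quadratic losses and average forgetting E(t) = (1/t)∑_{o=1}^{t} E_o(θ_t), if E(1) = ⋯ = E(t−1) = 0 then E(t) = (1/(2t)) Δ_tᵀ(∑_{o<t} H_o)Δ_t. -/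
/-!
If every loss vanishes at `θ_{t-1}` on the previous tasks, then `θ_{t-1} - θ_o` lies in the kernel
of `H_o` for every `o < t`, since a positive semidefinite quadratic form vanishes only on the
kernel. Writing `θ_t - θ_o = Δ_t + (θ_{t-1} - θ_o)`, the kernel part drops out of each quadratic
form by symmetry of `H_o`, so `E_o(θ_t) = ½ Δ_tᵀ H_o Δ_t`; summing over `o < t` and using
`E_t(θ_t) = 0` gives the formula.
-/

open Finset

namespace Matrix

variable {α ι : Type*} [Fintype ι]

theorem IsSymm.add_dotProduct_mulVec_add_of_mulVec_eq_zero {R : Type*} [CommSemiring R]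
    {A : Matrix ι ι R} (hA : A.IsSymm) (x : ι → R) {y : ι → R} (hy : A *ᵥ y = 0) :
    (x + y) ⬝ᵥ A *ᵥ (x + y) = x ⬝ᵥ A *ᵥ x := by
  have hyx : y ⬝ᵥ A *ᵥ x = 0 := by
    rw [dotProduct_mulVec, ← hA.eq, vecMul_transpose, hy, zero_dotProduct]
  rw [mulVec_add, hy, add_zero, add_dotProduct, hyx, add_zero]

theorem dotProduct_sum_mulVec {R : Type*} [CommSemiring R] (s : Finset α)
    (A : α → Matrix ι ι R) (x : ι → R) :
    x ⬝ᵥ (∑ i ∈ s, A i) *ᵥ x = ∑ i ∈ s, x ⬝ᵥ A i *ᵥ x := by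
  rw [sum_mulVec, dotProduct_sum]

theorem PosSemidef.mulVec_eq_zero_of_sum_dotProduct_mulVec_eq_zero {s : Finset α}
    {A : α → Matrix ι ι ℝ} (hA : ∀ i ∈ s, (A i).PosSemidef) {v : α → ι → ℝ}
    (h : ∑ i ∈ s, v i ⬝ᵥ A i *ᵥ v i = 0) : ∀ i ∈ s, A i *ᵥ v i = 0 := by
  have hnonneg : ∀ i ∈ s, 0 ≤ v i ⬝ᵥ A i *ᵥ v i := fun i hi ↦
    by simpa using (hA i hi).dotProduct_mulVec_nonneg (v i)
  intro i hi
  have hzero := (sum_eq_zero_iff_of_nonneg hnonneg).mp h i hi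
  exact ((hA i hi).dotProduct_mulVec_zero_iff (v i)).mp (by simpa using hzero)

theorem PosSemidef.sum_dotProduct_mulVec_sub_eq_of_eq_zero {s : Finset α}
    {A : α → Matrix ι ι ℝ} (hA : ∀ i ∈ s, (A i).PosSemidef) {θ : α → ι → ℝ} {ψ : ι → ℝ}
    (h : ∑ i ∈ s, (ψ - θ i) ⬝ᵥ A i *ᵥ (ψ - θ i) = 0) (φ : ι → ℝ) :
    ∑ i ∈ s, (φ - θ i) ⬝ᵥ A i *ᵥ (φ - θ i) = (φ - ψ) ⬝ᵥ (∑ i ∈ s, A i) *ᵥ (φ - ψ) := by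
  have hker := mulVec_eq_zero_of_sum_dotProduct_mulVec_eq_zero hA h
  rw [dotProduct_sum_mulVec]
  refine sum_congr rfl fun i hi ↦ ?_
  have hsymm : (A i).IsSymm := isHermitian_iff_isSymm.mp (hA i hi).isHermitian
  rw [← hsymm.add_dotProduct_mulVec_add_of_mulVec_eq_zero (φ - ψ) (hker i hi),
    sub_add_sub_cancel]

end Matrix

open Matrix

theorem null_forgetting_quadratic_general {n : ℕ} (t : ℕ)
    (θ : ℕ → Fin n → ℝ) (H : ℕ → Matrix (Fin n) (Fin n) ℝ)
    (hH : ∀ o, (H o).PosSemidef)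
    (E : ℕ → (Fin n → ℝ) → ℝ)
    (hE : ∀ o ψ, E o ψ = (1 / 2 : ℝ) * ((ψ - θ o) ⬝ᵥ (H o).mulVec (ψ - θ o)))
    (hprev : ∀ k, 1 ≤ k → k < t →
      (1 / (k : ℝ)) * ∑ o ∈ Finset.Icc 1 k, E o (θ k) = 0) :
    (1 / (t : ℝ)) * ∑ o ∈ Finset.Icc 1 t, E o (θ t) =
      (1 / (2 * (t : ℝ))) * ((θ t - θ (t - 1)) ⬝ᵥ
        (∑ o ∈ Finset.Ico 1 t, H o).mulVec (θ t - θ (t - 1))) := by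
  obtain _ | s := t
  · simp
  have hmin : ∑ o ∈ Icc 1 s, (θ s - θ o) ⬝ᵥ H o *ᵥ (θ s - θ o) = 0 := by
    rcases Nat.eq_zero_or_pos s with rfl | hs
    · simp
    · have h := hprev s hs (Nat.lt_succ_self s)
      simp only [hE, ← mul_sum] at h
      simpa [hs.ne'] using h
  have hsum := PosSemidef.sum_dotProduct_mulVec_sub_eq_of_eq_zero (fun o _ ↦ hH o) hmin
    (θ (s + 1))
  simp only [hE, ← mul_sum] at hsum ⊢
  rw [sum_Icc_succ_top (by omega), sub_self, zero_dotProduct, add_zero, hsum,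
    Nat.add_sub_cancel, Ico_add_one_right_eq_Icc]
  ring

theorem null_forgetting_quadratic {n : ℕ} (t : ℕ) (ht : 1 ≤ t)
    (θ : ℕ → Fin n → ℝ) (H : ℕ → Matrix (Fin n) (Fin n) ℝ)
    (hH : ∀ o, (H o).PosSemidef)
    (E : ℕ → (Fin n → ℝ) → ℝ)
    (hE : ∀ o ψ, E o ψ = (1 / 2 : ℝ) * ((ψ - θ o) ⬝ᵥ (H o).mulVec (ψ - θ o)))
    (hprev : ∀ k, 1 ≤ k → k < t →
      (1 / (k : ℝ)) * ∑ o ∈ Finset.Icc 1 k, E o (θ k) = 0) :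
    (1 / (t : ℝ)) * ∑ o ∈ Finset.Icc 1 t, E o (θ t) =
      (1 / (2 * (t : ℝ))) * ((θ t - θ (t - 1)) ⬝ᵥ
        (∑ o ∈ Finset.Ico 1 t, H o).mulVec (θ t - θ (t - 1))) :=
  null_forgetting_quadratic_general t θ H hH E hE hprev
end
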